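/- If X=x causes Y=y in (M,u⃗) according to Def 3 (contrastive necessity with actual direct sufficiency), then X=x causes Y=y according to the Original HP definition. -/

import Mathlib

open Classical

/-- A strongly recursive structural-equations (causal) model with exogenous
variables `U`, endogenous variables `V`, and values in `α`.  `rng v` is the
range `R(v)` of an endogenous variable; `F v u s` is the structural equation of
`v` evaluated in context `u` at the assignment `s` (it does not depend on
`s v`); `solve Z g u` is the unique solution of the model obtained by
intervening `Z ← g` in context `u`; `actual u` is the actual world of context
`u`; `prec` is a well-founded order witnessing strong recursivity. -/
structure CausalModel (U V α : Type) where
  rng : V → Set α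
  F : V → U → (V → α) → α
  F_rng : ∀ (v : V) (u : U) (s : V → α), F v u s ∈ rng v
  F_self : ∀ (v : V) (u : U) (s s' : V → α), (∀ w, w ≠ v → s w = s' w) → F v u s = F v u s'
  solve : Set V → (V → α) → U → V → α
  solve_mem : ∀ (Z : Set V) (g : V → α) (u : U), ∀ v ∈ Z, solve Z g u v = g v
  solve_not_mem : ∀ (Z : Set V) (g : V → α) (u : U) (v : V), v ∉ Z →
    solve Z g u v = F v u (solve Z g u)
  solve_unique : ∀ (Z : Set V) (g : V → α) (u : U) (s : V → α),
    (∀ v ∈ Z, s v = g v) → (∀ v ∉ Z, s v = F v u s) → s = solve Z g u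
  actual : U → V → α
  actual_def : ∀ (g : V → α) (u : U), solve ∅ g u = actual u
  prec : V → V → Prop
  prec_wf : WellFounded prec
  prec_dep : ∀ a b : V, (∃ (u : U) (s s' : V → α), (∀ w, s w ∈ rng w) ∧ (∀ w, s' w ∈ rng w) ∧
    (∀ w, w ≠ a → s w = s' w) ∧ F b u s ≠ F b u s') → prec a b

namespace CausalModel

variable {U V α : Type}

/-- The assignment that is `x` on `X` and `g` elsewhere. -/
noncomputable def merge (X : Set V) (x g : V → α) : V → α :=
  fun v => if v ∈ X then x v else g v

/-- `g` is a valid setting: every variable gets a value in its range. -/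
def Setting (M : CausalModel U V α) (g : V → α) : Prop := ∀ v, g v ∈ M.rng v

/-- `X⃗=x⃗` is directly sufficient for `Y⃗=y⃗`: in every context, intervening
`X⃗ ← x⃗` together with arbitrary (in-range) values for all remaining variables
`C⃗ = V ∖ (X⃗ ∪ Y⃗)` yields `Y⃗ = y⃗`. -/
def directlySuff (M : CausalModel U V α) (X : Set V) (x : V → α) (Y : Set V) (y : V → α) : Prop :=
  ∀ g : V → α, M.Setting g → (∀ v ∈ X, g v = x v) →
    ∀ u : U, ∀ v ∈ Y, M.solve (X ∪ (X ∪ Y)ᶜ) g u v = y v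

/-- Actual direct sufficiency: as `directlySuff` but only in the given context `u`. -/
def actDirectlySuff (M : CausalModel U V α) (u : U) (X : Set V) (x : V → α)
    (Y : Set V) (y : V → α) : Prop :=
  ∀ g : V → α, M.Setting g → (∀ v ∈ X, g v = x v) →
    ∀ v ∈ Y, M.solve (X ∪ (X ∪ Y)ᶜ) g u v = y v

/-- `X⃗=x⃗` is weakly sufficient for `Y⃗=y⃗`: in every context, `[X⃗ ← x⃗] Y⃗=y⃗`. -/
def weaklySuff (M : CausalModel U V α) (X : Set V) (x : V → α) (Y : Set V) (y : V → α) : Prop :=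
  ∀ u : U, ∀ v ∈ Y, M.solve X x u v = y v

/-- Actual weak sufficiency in context `u`: `(M,u) ⊨ [X⃗ ← x⃗] Y⃗=y⃗`. -/
def actWeaklySuff (M : CausalModel U V α) (u : U) (X : Set V) (x : V → α)
    (Y : Set V) (y : V → α) : Prop :=
  ∀ v ∈ Y, M.solve X x u v = y v

/-- `X⃗=x⃗` is strongly sufficient for `Y⃗=y⃗`: it is directly sufficient for some
superset `N⃗ ⊇ Y⃗` with values extending `y⃗`. -/
def stronglySuff (M : CausalModel U V α) (X : Set V) (x : V → α) (Y : Set V) (y : V → α) : Prop :=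
  ∃ (N : Set V) (n : V → α), Y ⊆ N ∧ (∀ v ∈ Y, n v = y v) ∧ M.directlySuff X x N n

/-- Actual strong sufficiency of `X⃗=x⃗` for the single effect `Y0 = y` along the
network `N` in context `u`. -/
def actStronglySuffNet (M : CausalModel U V α) (u : U) (X : Set V) (x : V → α)
    (Y0 : V) (y : α) (N : Set V) : Prop :=
  ∃ n : V → α, Y0 ∈ N ∧ n Y0 = y ∧ M.actDirectlySuff u X x N n

/-- `a` is a parent of `b`: the equation of `b` depends on the value of `a`. -/
def IsParent (M : CausalModel U V α) (a b : V) : Prop :=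
  ∃ (u : U) (s s' : V → α), M.Setting s ∧ M.Setting s' ∧
    (∀ w, w ≠ a → s w = s' w) ∧ M.F b u s ≠ M.F b u s'

/-- `a` is only a parent of `b`: the single edge `a → b` is the only directed
path from `a` to `b`. -/
def OnlyParent (M : CausalModel U V α) (a b : V) : Prop :=
  M.IsParent a b ∧ ¬ ∃ z, M.IsParent a z ∧ Relation.TransGen M.IsParent z b

/-- `R` is the set of root variables: equations of members of `R` depend only on
the context, and equations of all other variables do not depend on the context
(exogenous variables appear only in equations of the form `V = U`). -/
def IsRootSet (M : CausalModel U V α) (R : Set V) : Prop :=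
  (∀ v ∈ R, ∀ (u : U) (s s' : V → α), M.F v u s = M.F v u s') ∧
  (∀ v ∉ R, ∀ (u u' : U) (s : V → α), M.F v u s = M.F v u' s)

/-- Def 2: contrastive necessity with actual strong sufficiency (AC1, AC2, AC3). -/
def CauseDef2 (M : CausalModel U V α) (u : U) (X : Set V) (x : V → α) (Y0 : V) (y : α) : Prop :=
  (∀ v ∈ X, M.actual u v = x v) ∧ M.actual u Y0 = y ∧
  (∃ (W N : Set V) (x' : V → α), Disjoint W (X ∪ {Y0}) ∧ (∀ v ∈ X, x' v ∈ M.rng v) ∧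
      M.actStronglySuffNet u (X ∪ W) (merge X x (M.actual u)) Y0 y N ∧
      ∀ S ⊆ N, ¬ M.actStronglySuffNet u (X ∪ W) (merge X x' (M.actual u)) Y0 y S) ∧
  (∀ X' ⊂ X, ¬ ∃ (W N : Set V) (x' : V → α), Disjoint W (X' ∪ {Y0}) ∧
      (∀ v ∈ X', x' v ∈ M.rng v) ∧
      M.actStronglySuffNet u (X' ∪ W) (merge X' x (M.actual u)) Y0 y N ∧
      ∀ S ⊆ N, ¬ M.actStronglySuffNet u (X' ∪ W) (merge X' x' (M.actual u)) Y0 y S)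

/-- Def 3: contrastive necessity with actual direct sufficiency (AC1, AC2, AC3). -/
def CauseDef3 (M : CausalModel U V α) (u : U) (X : Set V) (x : V → α) (Y0 : V) (y : α) : Prop :=
  (∀ v ∈ X, M.actual u v = x v) ∧ M.actual u Y0 = y ∧
  (∃ (W : Set V) (x' : V → α), Disjoint W (X ∪ {Y0}) ∧ (∀ v ∈ X, x' v ∈ M.rng v) ∧
      M.actDirectlySuff u (X ∪ W) (merge X x (M.actual u)) {Y0} (fun _ => y) ∧
      ¬ M.actDirectlySuff u (X ∪ W) (merge X x' (M.actual u)) {Y0} (fun _ => y)) ∧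
  (∀ X' ⊂ X, ¬ ∃ (W : Set V) (x' : V → α), Disjoint W (X' ∪ {Y0}) ∧
      (∀ v ∈ X', x' v ∈ M.rng v) ∧
      M.actDirectlySuff u (X' ∪ W) (merge X' x (M.actual u)) {Y0} (fun _ => y) ∧
      ¬ M.actDirectlySuff u (X' ∪ W) (merge X' x' (M.actual u)) {Y0} (fun _ => y))

/-- Def 4 (singleton cause): contrastive necessity with non-actual weak sufficiency. -/
def CauseDef4 (M : CausalModel U V α) (u : U) (X0 : V) (x0 : α) (Y0 : V) (y : α) : Prop :=
  M.actual u X0 = x0 ∧ M.actual u Y0 = y ∧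
  ∃ (W : Set V) (x' : α), Disjoint W ({X0} ∪ {Y0} : Set V) ∧ x' ∈ M.rng X0 ∧
    M.weaklySuff ({X0} ∪ W) (merge {X0} (fun _ => x0) (M.actual u)) {Y0} (fun _ => y) ∧
    ¬ M.weaklySuff ({X0} ∪ W) (merge {X0} (fun _ => x') (M.actual u)) {Y0} (fun _ => y)

/-- Def 8 (singleton cause): minimal necessity with actual strong sufficiency
(minimality AC3 is automatic for singletons). -/
def CauseDef8 (M : CausalModel U V α) (u : U) (X0 : V) (x0 : α) (Y0 : V) (y : α) : Prop :=
  M.actual u X0 = x0 ∧ M.actual u Y0 = y ∧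
  ∃ W N : Set V, Disjoint W ({X0} ∪ {Y0} : Set V) ∧
    M.actStronglySuffNet u ({X0} ∪ W) (merge {X0} (fun _ => x0) (M.actual u)) Y0 y N ∧
    ∀ S ⊆ N, ¬ M.actStronglySuffNet u W (M.actual u) Y0 y S

/-- Def 10 (singleton cause): minimal necessity with non-actual weak sufficiency. -/
def CauseDef10 (M : CausalModel U V α) (u : U) (X0 : V) (x0 : α) (Y0 : V) (y : α) : Prop :=
  M.actual u X0 = x0 ∧ M.actual u Y0 = y ∧
  ∃ W : Set V, Disjoint W ({X0} ∪ {Y0} : Set V) ∧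
    M.weaklySuff ({X0} ∪ W) (merge {X0} (fun _ => x0) (M.actual u)) {Y0} (fun _ => y) ∧
    ¬ M.weaklySuff W (M.actual u) {Y0} (fun _ => y)

end CausalModel

namespace CausalModel

/-- The Original HP definition for a singleton cause `X0 = x0` of `Y0 = y`:
AC1, and AC2 with a partition of `V` into `Z⃗ = W⃗'ᶜ ∋ X0, Y0` and `W⃗'`, and
settings `x'`, `w⃗'`: AC2(a): `(M,u) ⊨ [X0←x', W⃗'←w⃗'] Y0 ≠ y`; AC2(b): for all
`Y⃗' ⊆ Z⃗ ∖ {X0}`, `(M,u) ⊨ [X0←x0, W⃗'←w⃗', Y⃗'←y⃗'*] Y0 = y`.  (AC3 is automatic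
for singleton causes.) -/
def CauseOHP {U V α : Type} (M : CausalModel U V α) (u : U)
    (X0 : V) (x0 : α) (Y0 : V) (y : α) : Prop :=
  M.actual u X0 = x0 ∧ M.actual u Y0 = y ∧
  ∃ (W' : Set V) (x' : α) (w' : V → α), X0 ∉ W' ∧ Y0 ∉ W' ∧
    x' ∈ M.rng X0 ∧ (∀ v ∈ W', w' v ∈ M.rng v) ∧
    ¬ M.actWeaklySuff u ({X0} ∪ W') (merge {X0} (fun _ => x') w') {Y0} (fun _ => y) ∧
    ∀ Y' ⊆ W'ᶜ \ {X0}, M.actWeaklySuff u ({X0} ∪ W' ∪ Y')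
        (merge {X0} (fun _ => x0) (merge W' w' (M.actual u))) {Y0} (fun _ => y)

/-!
The failure of direct sufficiency of `(X0 = x', W = w*)` provides a setting `g` of all variables
but `Y0`, equal to `x'` on `X0` and to `w*` on `W`, under which `Y0 ≠ y`. Taking `W' = {X0, Y0}ᶜ`
and `w' = g`, AC2(a) is exactly this failure. Since `Y' ⊆ {Y0}` in AC2(b), either `Y0 ∈ Y'` is
itself fixed to its actual value `y`, or `Y' = ∅` and AC2(b) is an instance of the direct
sufficiency of `(X0 = x0, W = w*)`: the setting `g` on `W'` and `w*` elsewhere agrees with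
`(x0, w*)` on `{X0} ∪ W` because `x0` and `w*` are actual values.
-/

section

variable {U V α : Type}

section Merge

variable {X : Set V} {x g : V → α} {v : V}

@[simp]
theorem merge_apply_of_mem (hv : v ∈ X) : merge X x g v = x v := if_pos hv

@[simp]
theorem merge_apply_of_notMem (hv : v ∉ X) : merge X x g v = g v := if_neg hv

theorem merge_eq_right (h : ∀ v ∈ X, x v = g v) : merge X x g = g := by
  funext v
  by_cases hv : v ∈ X
  · simp [hv, h v hv]
  · simp [hv]

theorem Setting.merge {M : CausalModel U V α} (hx : ∀ v ∈ X, x v ∈ M.rng v)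
    (hg : M.Setting g) : M.Setting (merge X x g) := by
  intro v
  by_cases hv : v ∈ X
  · simpa [hv] using hx v hv
  · simpa [hv] using hg v

end Merge

variable (M : CausalModel U V α) (u : U)

theorem setting_actual : M.Setting (M.actual u) := by
  intro v
  rw [← M.actual_def (M.actual u) u, M.solve_not_mem ∅ _ u v (Set.notMem_empty v)]
  exact M.F_rng v u _

theorem actDirectlySuff_singleton_iff (A : Set V) (a : V → α) (Y0 : V) (y : α) :
    M.actDirectlySuff u A a {Y0} (fun _ => y) ↔
      ∀ g, M.Setting g → (∀ v ∈ A, g v = a v) → M.solve (A ∪ {Y0}ᶜ) g u Y0 = y := by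
  have hA : A ∪ (A ∪ {Y0})ᶜ = A ∪ {Y0}ᶜ := by
    rw [Set.compl_union, Set.inter_comm, ← Set.sdiff_eq, Set.union_sdiff_self]
  simp only [actDirectlySuff, hA, Set.mem_singleton_iff, forall_eq]

end

theorem def3_implies_originalHP_general {U V α : Type} (M : CausalModel U V α) (u : U)
    (X0 : V) (x0 : α) (Y0 : V) (y : α)
    (h : CauseDef3 M u {X0} (fun _ => x0) Y0 y) :
    CauseOHP M u X0 x0 Y0 y := by
  obtain ⟨hAC1, hy, ⟨W, x', hWdisj, hx'rng, hsuff, hnsuff⟩, -⟩ := h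
  have hx0 : M.actual u X0 = x0 := hAC1 X0 rfl
  have hX0W : X0 ∉ W := fun hX0 => hWdisj.notMem_of_mem_left hX0 (Or.inl rfl)
  have hY0W : Y0 ∉ W := fun hY0 => hWdisj.notMem_of_mem_left hY0 (Or.inr rfl)
  have hI : {X0} ∪ W ∪ {Y0}ᶜ = {X0} ∪ ({X0, Y0} : Set V)ᶜ := by
    ext v; by_cases hv : v = Y0 <;> simp [hv, hY0W]; tauto
  have hmerge_x0 {g : V → α} (hg : g X0 = x0) : merge {X0} (fun _ => x0) g = g :=
    merge_eq_right (by simpa using hg.symm)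
  rw [hmerge_x0 hx0, actDirectlySuff_singleton_iff, hI] at hsuff
  rw [actDirectlySuff_singleton_iff, hI] at hnsuff
  push Not at hnsuff
  obtain ⟨g, hg, hgW, hgY0⟩ := hnsuff
  have hgX0 : g X0 = x' X0 := by simpa using hgW X0 (Or.inl rfl)
  refine ⟨hx0, hy, ({X0, Y0} : Set V)ᶜ, x' X0, g, by simp, by simp, hx'rng X0 rfl,
    fun v _ => hg v, ?_, ?_⟩
  · rw [merge_eq_right (by simpa using hgX0.symm)]
    exact fun h => hgY0 (h Y0 rfl)
  intro Y' hY' v hv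
  rw [Set.mem_singleton_iff.mp hv, hmerge_x0 (by simpa using hx0)]
  have hY'Y0 : Y' ⊆ {Y0} := fun z hz => (by simpa using hY' hz : z = Y0 ∧ z ≠ X0).1
  obtain rfl | rfl := Set.subset_singleton_iff_eq.mp hY'Y0
  · rw [Set.union_empty]
    refine hsuff _ (Setting.merge (fun v _ => hg v) (setting_actual M u)) ?_
    rintro v (rfl | hvW)
    · simp
    · have hvX0 : v ≠ X0 := ne_of_mem_of_not_mem hvW hX0W
      have hvY0 : v ≠ Y0 := ne_of_mem_of_not_mem hvW hY0W
      simpa [hvX0, hvY0] using hgW v (Or.inr hvW)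
  · rw [M.solve_mem _ _ u Y0 (Or.inr rfl)]
    simpa using hy

/-- Def 3 (contrastive necessity with actual direct sufficiency)
implies the Original HP definition. -/
theorem def3_implies_originalHP {U V α : Type} (M : CausalModel U V α) (u : U)
    (X0 : V) (x0 : α) (Y0 : V) (y : α) (hne : X0 ≠ Y0)
    (h : CauseDef3 M u {X0} (fun _ => x0) Y0 y) :
    CauseOHP M u X0 x0 Y0 y :=
  def3_implies_originalHP_general M u X0 x0 Y0 y h

end CausalModel
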